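/- Let n, k ∈ ℕ, T = ℝ^n, I = {i ∈ ℤ_+^n : |i| ≤ 2k}, ρ(t) = e^{−‖t‖^{2k}}, and let g = (g_i)_{i∈I} be real numbers with g_0 = 1. Suppose λ* ∈ ℝ^N (N = card I) is a point at which the functional L(λ) = Σ_{|i|≤2k} g_i λ_i − ∫_{ℝ^n} e^{Σ_{|i|≤2k} λ_i t^i} ρ(t) dt attains its finite global maximum. Define f_0(t) = e^{Σ_{|i|≤2k} λ*_i t^i} ρ(t) = exp(Σ_{|i|≤2k} λ*_i t^i − ‖t‖^{2k}). Then f_0 has finite moments of all orders ≤ 2k (∫_{ℝ^n} |t^i| f_0(t) dt < ∞ for all |i| ≤ 2k), ∫_{ℝ^n} t^i f_0(t) dt = g_i for all i with |i| < 2k, and ∫_{ℝ^n} t_ι^{2k} f_0(t) dt ≤ g_{2k·e_ι} for every 1 ≤ ι ≤ n. -/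

import Mathlib

open MeasureTheory Real ENNReal

/-- The monomial `t ^ i = t₁^{i₁} ⋯ tₙ^{iₙ}`. -/
noncomputable def monom {n : ℕ} (i : Fin n → ℕ) (t : Fin n → ℝ) : ℝ := ∏ j, t j ^ i j

/-- The reference density `ρ(t) = e^{−‖t‖^{2k}} = e^{−(∑_j t_j²)^k}` on `ℝⁿ`. -/
noncomputable def rhoRef {n : ℕ} (k : ℕ) (t : Fin n → ℝ) : ℝ :=
  Real.exp (-(∑ j, t j ^ 2) ^ k)

/-- The concave Lagrangian functional on `T = ℝⁿ`:
`L(λ) = ∑_{|i|≤2k} g_i λ_i − ∫_{ℝⁿ} e^{∑ λ_i t^i} ρ(t) dt`, with values in `ℝ ∪ {−∞}`. -/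
noncomputable def Lag {n : ℕ} (I : Finset (Fin n → ℕ))
    (g : (Fin n → ℕ) → ℝ) (ρ : (Fin n → ℝ) → ℝ) (lam : {i // i ∈ I} → ℝ) : EReal :=
  ((∑ i ∈ I.attach, g i.1 * lam i : ℝ) : EReal)
    - ((∫⁻ t, ENNReal.ofReal (Real.exp (∑ i ∈ I.attach, lam i * monom i.1 t) * ρ t)) : EReal)

/-- The candidate maximum-entropy density `f₀(t) = e^{∑ λ*_i t^i} ρ(t)`. -/
noncomputable def maxEntDens {n : ℕ} (k : ℕ) (I : Finset (Fin n → ℕ))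
    (lamstar : {i // i ∈ I} → ℝ) (t : Fin n → ℝ) : ℝ :=
  Real.exp (∑ i ∈ I.attach, lamstar i * monom i.1 t) * rhoRef k t

/-! Perturbing `λ*` in a direction `w` whose polynomial `∑ w_i t^i` is bounded above keeps `L`
finite, so maximality gives `s ∑ g_i w_i ≤ ∫ (e^{s ∑ w_i t^i} - 1) f₀` for `s > 0`. The
difference quotients are bounded above, so Fatou's lemma lets `s → 0` and yields
`∑ g_i w_i ≤ ∫ (∑ w_i t^i) f₀`. The directions `-e_{2k e_ι}` give the bounds on the pure
moments, and their sum gives integrability of all moments since `|t^i| ≤ 1 + ∑ t_ι^{2k}` for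
`|i| ≤ 2k`. For `|i| < 2k` both directions `±e_i - ε ∑_ι e_{2k e_ι}` are admissible, and
`ε → 0` gives `∫ t^i f₀ = g_i`. -/

open Filter Topology

section MonomialBounds

variable {n : ℕ}

lemma abs_monom_le_pow {R : ℝ} (i : Fin n → ℕ) {t : Fin n → ℝ} (ht : ∀ j, |t j| ≤ R) :
    |monom i t| ≤ R ^ ∑ j, i j := by
  rw [monom, Finset.abs_prod, ← Finset.prod_pow_eq_pow_sum]
  gcongr with j
  rw [abs_pow]
  exact pow_le_pow_left₀ (abs_nonneg _) (ht j) _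

lemma max_one_norm_pow_le (t : Fin n → ℝ) (p : ℕ) :
    max 1 ‖t‖ ^ p ≤ 1 + ∑ j, |t j| ^ p := by
  have hsum : 0 ≤ ∑ j, |t j| ^ p := by positivity
  rcases le_total ‖t‖ 1 with h | h
  · rw [max_eq_left h, one_pow]
    linarith
  · have hne : (Finset.univ : Finset (Fin n)).Nonempty := by
      by_contra hempty
      rw [Finset.not_nonempty_iff_eq_empty] at hempty
      simp [Pi.norm_def, hempty] at h
      linarith
    obtain ⟨j, -, hj⟩ := Finset.exists_mem_eq_sup _ hne fun j => ‖t j‖₊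
    have htj : ‖t‖ = |t j| := by rw [Pi.norm_def, hj]; rfl
    rw [max_eq_right h, htj]
    linarith [Finset.single_le_sum (fun j _ => pow_nonneg (abs_nonneg (t j)) p)
      (Finset.mem_univ j)]

lemma abs_monom_le_max_one_norm_pow (i : Fin n → ℕ) (t : Fin n → ℝ) :
    |monom i t| ≤ max 1 ‖t‖ ^ ∑ j, i j :=
  abs_monom_le_pow i fun j => (norm_le_pi_norm t j).trans (le_max_right _ _)

lemma abs_monom_le_one_add_sum {k : ℕ} {i : Fin n → ℕ} (hi : ∑ j, i j ≤ 2 * k)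
    (t : Fin n → ℝ) : |monom i t| ≤ 1 + ∑ j, t j ^ (2 * k) := by
  calc |monom i t| ≤ max 1 ‖t‖ ^ ∑ j, i j := abs_monom_le_max_one_norm_pow i t
    _ ≤ max 1 ‖t‖ ^ (2 * k) := pow_le_pow_right₀ (le_max_left _ _) hi
    _ ≤ 1 + ∑ j, |t j| ^ (2 * k) := max_one_norm_pow_le t _
    _ = 1 + ∑ j, t j ^ (2 * k) := by simp_rw [(even_two_mul k).pow_abs]

lemma exists_pow_le_mul_pow_add {p q : ℕ} (hpq : p < q) {ε : ℝ} (hε : 0 < ε) :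
    ∃ C, ∀ a : ℝ, 1 ≤ a → a ^ p ≤ ε * a ^ q + C := by
  refine ⟨max 1 ε⁻¹ ^ p, fun a ha => ?_⟩
  rcases le_total a (max 1 ε⁻¹) with h | h
  · have := pow_le_pow_left₀ (zero_le_one.trans ha) h p
    have : 0 ≤ ε * a ^ q := by positivity
    linarith
  · have hq : a ^ q = a ^ p * a ^ (q - p) := by rw [← pow_add, Nat.add_sub_cancel' hpq.le]
    have hqp : ε⁻¹ ≤ a ^ (q - p) := calc
      ε⁻¹ ≤ a := (le_max_right _ _).trans h
      _ ≤ a ^ (q - p) := le_self_pow₀ ha (by omega)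
    have : a ^ p ≤ ε * a ^ q := by
      rw [hq, mul_left_comm]
      refine le_mul_of_one_le_right (by positivity) ?_
      rwa [inv_le_iff_one_le_mul₀' hε] at hqp
    have : 0 ≤ max 1 ε⁻¹ ^ p := by positivity
    linarith

lemma exists_abs_monom_le_mul_add {k : ℕ} {i : Fin n → ℕ} (hi : ∑ j, i j < 2 * k)
    {ε : ℝ} (hε : 0 < ε) : ∃ C, ∀ t, |monom i t| ≤ ε * ∑ j, t j ^ (2 * k) + C := by
  obtain ⟨C, hC⟩ := exists_pow_le_mul_pow_add hi hε
  refine ⟨ε + C, fun t => ?_⟩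
  calc |monom i t| ≤ max 1 ‖t‖ ^ ∑ j, i j := abs_monom_le_max_one_norm_pow i t
    _ ≤ ε * max 1 ‖t‖ ^ (2 * k) + C := hC _ (le_max_left _ _)
    _ ≤ ε * (1 + ∑ j, |t j| ^ (2 * k)) + C := by gcongr; exact max_one_norm_pow_le t _
    _ = ε * ∑ j, t j ^ (2 * k) + (ε + C) := by simp_rw [(even_two_mul k).pow_abs]; ring

end MonomialBounds

lemma exp_mul_sub_one_le {s : ℝ} (hs0 : 0 ≤ s) (hs1 : s ≤ 1) (x : ℝ) :
    exp (s * x) - 1 ≤ s * (exp x - 1) := by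
  have := convexOn_exp.2 (Set.mem_univ x) (Set.mem_univ 0) hs0 (sub_nonneg.2 hs1) (by ring)
  simp only [smul_eq_mul, mul_zero, add_zero, exp_zero, mul_one] at this
  linarith

lemma tendsto_exp_mul_sub_one_div (x : ℝ) :
    Tendsto (fun s => (exp (s * x) - 1) / s) (𝓝[≠] 0) (𝓝 x) := by
  have hd : HasDerivAt (fun s => exp (s * x)) x 0 := by
    simpa using ((hasDerivAt_id (0 : ℝ)).mul_const x).exp
  refine hd.tendsto_slope.congr fun s => ?_
  simp [slope_def_field]

section Fatou

variable {α : Type*} [MeasurableSpace α] {μ : Measure α}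

lemma integrable_and_integral_le_of_tendsto {q : ℕ → α → ℝ} {Q : α → ℝ} {B : ℝ}
    (hq : ∀ m, Integrable (q m) μ) (hq0 : ∀ m x, 0 ≤ q m x)
    (hlim : ∀ x, Tendsto (fun m => q m x) atTop (𝓝 (Q x))) (hB : ∀ m, ∫ x, q m x ∂μ ≤ B) :
    Integrable Q μ ∧ ∫ x, Q x ∂μ ≤ B := by
  have hQ0 : ∀ x, 0 ≤ Q x := fun x => ge_of_tendsto' (hlim x) fun m => hq0 m x
  have hQmeas : AEStronglyMeasurable Q μ :=
    aestronglyMeasurable_of_tendsto_ae atTop (fun m => (hq m).1) (ae_of_all _ hlim)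
  have hB0 : 0 ≤ B := (integral_nonneg (hq0 0)).trans (hB 0)
  have hfatou : ∫⁻ x, ENNReal.ofReal (Q x) ∂μ ≤ ENNReal.ofReal B := calc
    ∫⁻ x, ENNReal.ofReal (Q x) ∂μ
        = ∫⁻ x, liminf (fun m => ENNReal.ofReal (q m x)) atTop ∂μ :=
      lintegral_congr fun x =>
        ((ENNReal.continuous_ofReal.tendsto _).comp (hlim x)).liminf_eq.symm
    _ ≤ liminf (fun m => ∫⁻ x, ENNReal.ofReal (q m x) ∂μ) atTop :=
      lintegral_liminf_le' fun m => (hq m).1.aemeasurable.ennreal_ofReal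
    _ ≤ ENNReal.ofReal B := by
      refine liminf_le_of_frequently_le' (Frequently.of_forall fun m => ?_)
      rw [← ofReal_integral_eq_lintegral_ofReal (hq m) (ae_of_all _ (hq0 m))]
      exact ENNReal.ofReal_le_ofReal (hB m)
  refine ⟨⟨hQmeas, ?_⟩, ?_⟩
  · rw [hasFiniteIntegral_iff_ofReal (ae_of_all _ hQ0)]
    exact hfatou.trans_lt ENNReal.ofReal_lt_top
  · rw [integral_eq_lintegral_of_nonneg_ae (ae_of_all _ hQ0) hQmeas]
    exact ENNReal.toReal_le_of_le_ofReal hB0 hfatou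

lemma integrable_mul_and_le_integral_of_exp_slope {f h : α → ℝ} {C G : ℝ}
    (hf : Integrable f μ) (hf0 : ∀ x, 0 ≤ f x) (hC : ∀ x, h x ≤ C)
    (hslope : ∀ s ∈ Set.Ioc (0 : ℝ) 1, Integrable (fun x => exp (s * h x) * f x) μ ∧
      s * G ≤ ∫ x, (exp (s * h x) - 1) * f x ∂μ) :
    Integrable (fun x => h x * f x) μ ∧ G ≤ ∫ x, h x * f x ∂μ := by
  set K := exp C - 1
  set s : ℕ → ℝ := fun m => 1 / ((m : ℝ) + 1)
  have hs : ∀ m, s m ∈ Set.Ioc (0 : ℝ) 1 := fun m =>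
    ⟨by positivity, div_le_one_of_le₀ (by simp) (by positivity)⟩
  set u : ℕ → α → ℝ := fun m x => (exp (s m * h x) - 1) / s m
  have hu : ∀ m x, u m x ≤ K := fun m x => by
    rw [div_le_iff₀' (hs m).1]
    calc exp (s m * h x) - 1 ≤ s m * (exp (h x) - 1) :=
          exp_mul_sub_one_le (hs m).1.le (hs m).2 _
      _ ≤ s m * K := by gcongr; exact sub_le_sub_right (exp_le_exp.2 (hC x)) 1
  have hu_lim : ∀ x, Tendsto (fun m => u m x) atTop (𝓝 (h x)) := fun x =>
    (tendsto_exp_mul_sub_one_div (h x)).comp <|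
      tendsto_nhdsWithin_of_tendsto_nhds_of_eventually_within _
        tendsto_one_div_add_atTop_nhds_zero_nat (Eventually.of_forall fun m => (hs m).1.ne')
  set E : ℕ → α → ℝ := fun m x => (exp (s m * h x) - 1) * f x
  have hE : ∀ m, Integrable (E m) μ := fun m =>
    ((hslope _ (hs m)).1.sub hf).congr
      (ae_of_all _ fun x => by simp only [E, Pi.sub_apply]; ring)
  have hq_eq : ∀ m x, (K - u m x) * f x = K * f x - (s m)⁻¹ * E m x := fun m x => by
    simp only [u, E]; ring
  have hq_int : ∀ m, Integrable (fun x => (K - u m x) * f x) μ := fun m => by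
    simp_rw [hq_eq]; exact (hf.const_mul K).sub ((hE m).const_mul _)
  have hq_le : ∀ m, ∫ x, (K - u m x) * f x ∂μ ≤ K * ∫ x, f x ∂μ - G := fun m => by
    have hG : G ≤ (s m)⁻¹ * ∫ x, E m x ∂μ := by
      rw [le_inv_mul_iff₀ (hs m).1]; exact (hslope _ (hs m)).2
    simp_rw [hq_eq]
    rw [integral_sub (hf.const_mul K) ((hE m).const_mul _), integral_const_mul,
      integral_const_mul]
    linarith
  obtain ⟨hQ_int, hQ_le⟩ := integrable_and_integral_le_of_tendsto hq_int
    (fun m x => mul_nonneg (sub_nonneg.2 (hu m x)) (hf0 x))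
    (fun x => ((tendsto_const_nhds.sub (hu_lim x)).mul_const (f x))) hq_le
  have hhf : ∀ x, h x * f x = K * f x - (K - h x) * f x := fun x => by ring
  simp_rw [hhf]
  refine ⟨(hf.const_mul K).sub hQ_int, ?_⟩
  rw [integral_sub (hf.const_mul K) hQ_int, integral_const_mul]
  linarith

end Fatou

section Lagrangian

variable {n k : ℕ} {I : Finset (Fin n → ℕ)} {g : (Fin n → ℕ) → ℝ}

lemma continuous_monom (i : Fin n → ℕ) : Continuous (monom i) := by
  unfold monom; fun_prop

lemma continuous_maxEntDens (lam : {i // i ∈ I} → ℝ) : Continuous (maxEntDens k I lam) := by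
  unfold maxEntDens rhoRef
  have := continuous_monom (n := n)
  fun_prop

lemma maxEntDens_pos (lam : {i // i ∈ I} → ℝ) (t : Fin n → ℝ) : 0 < maxEntDens k I lam t :=
  mul_pos (exp_pos _) (exp_pos _)

lemma Lag_eq_coe_of_integrable {lam : {i // i ∈ I} → ℝ} (h : Integrable (maxEntDens k I lam)) :
    Lag I g (rhoRef k) lam =
      ((∑ i ∈ I.attach, g i * lam i - ∫ t, maxEntDens k I lam t : ℝ) : EReal) := by
  have hint := ofReal_integral_eq_lintegral_ofReal h
    (ae_of_all _ fun t => (maxEntDens_pos lam t).le)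
  rw [Lag, EReal.coe_sub]
  change _ - ((∫⁻ t, ENNReal.ofReal (maxEntDens k I lam t) : ℝ≥0∞) : EReal) = _
  rw [← hint, EReal.coe_ennreal_ofReal,
    max_eq_left (integral_nonneg fun t => (maxEntDens_pos lam t).le)]

lemma integrable_maxEntDens_of_Lag_ne_bot {lam : {i // i ∈ I} → ℝ}
    (h : Lag I g (rhoRef k) lam ≠ ⊥) : Integrable (maxEntDens k I lam) := by
  refine ⟨(continuous_maxEntDens lam).aestronglyMeasurable, ?_⟩
  rw [hasFiniteIntegral_iff_ofReal (ae_of_all _ fun t => (maxEntDens_pos lam t).le),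
    lt_top_iff_ne_top]
  intro htop
  apply h
  change ((_ : ℝ) : EReal) - ((∫⁻ t, ENNReal.ofReal (maxEntDens k I lam t) : ℝ≥0∞) : EReal)
    = ⊥
  rw [htop, EReal.coe_ennreal_top, EReal.sub_top]

lemma maxEntDens_add_mul (lam : {i // i ∈ I} → ℝ) (w : (Fin n → ℕ) → ℝ) (s : ℝ)
    (t : Fin n → ℝ) :
    maxEntDens k I (fun i => lam i + s * w i) t =
      exp (s * ∑ j ∈ I, w j * monom j t) * maxEntDens k I lam t := by
  simp only [maxEntDens, add_mul, Finset.sum_add_distrib, exp_add, mul_assoc, ← Finset.mul_sum,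
    Finset.sum_attach I fun j => w j * monom j t]
  ring

variable {lamstar : {i // i ∈ I} → ℝ}

lemma integrable_and_mul_le_integral_exp_sub_one (hfin : Lag I g (rhoRef k) lamstar ≠ ⊥)
    (hmax : ∀ lam, Lag I g (rhoRef k) lam ≤ Lag I g (rhoRef k) lamstar)
    {w : (Fin n → ℕ) → ℝ} {C : ℝ} (hC : ∀ t, ∑ j ∈ I, w j * monom j t ≤ C)
    {s : ℝ} (hs : 0 ≤ s) :
    Integrable (fun t => exp (s * ∑ j ∈ I, w j * monom j t) * maxEntDens k I lamstar t) ∧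
      s * ∑ j ∈ I, w j * g j ≤
        ∫ t, (exp (s * ∑ j ∈ I, w j * monom j t) - 1) * maxEntDens k I lamstar t := by
  set f₀ := maxEntDens k I lamstar
  set P : (Fin n → ℝ) → ℝ := fun t => ∑ j ∈ I, w j * monom j t
  have hf₀ : Integrable f₀ := integrable_maxEntDens_of_Lag_ne_bot hfin
  have hf₀pos : ∀ t, 0 < f₀ t := maxEntDens_pos lamstar
  have hP : Continuous P := by
    have := continuous_monom (n := n)
    fun_prop
  have hint : Integrable (fun t => exp (s * P t) * f₀ t) := by
    refine (hf₀.const_mul (exp (s * C))).mono'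
      ((continuous_const.mul hP).rexp.mul (continuous_maxEntDens lamstar)).aestronglyMeasurable
      (ae_of_all _ fun t => ?_)
    rw [Real.norm_of_nonneg (mul_pos (exp_pos _) (hf₀pos t)).le]
    gcongr
    · exact (hf₀pos t).le
    · exact hC t
  have hdens : maxEntDens k I (fun i => lamstar i + s * w i) = fun t => exp (s * P t) * f₀ t :=
    funext (maxEntDens_add_mul lamstar w s)
  have hcompare := hmax fun i => lamstar i + s * w i
  rw [Lag_eq_coe_of_integrable (hdens ▸ hint), Lag_eq_coe_of_integrable hf₀,
    EReal.coe_le_coe_iff, hdens] at hcompare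
  refine ⟨hint, ?_⟩
  have hdiff : ∫ t, (exp (s * P t) - 1) * f₀ t = (∫ t, exp (s * P t) * f₀ t) - ∫ t, f₀ t := by
    simp_rw [sub_one_mul]
    exact integral_sub hint hf₀
  simp only [mul_add, Finset.sum_add_distrib, mul_left_comm _ s, ← Finset.mul_sum,
    mul_comm (g _) (w _), Finset.sum_attach I fun j => w j * g j] at hcompare
  change _ ≤ ∫ t, (exp (s * P t) - 1) * f₀ t
  linarith [show ∫ t, f₀ t = ∫ t, maxEntDens k I lamstar t from rfl]

end Lagrangian

lemma monom_single {n : ℕ} (ι : Fin n) (p : ℕ) (t : Fin n → ℝ) :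
    monom (Pi.single ι p) t = t ι ^ p := by
  simp [monom, Pi.single_apply, pow_ite]

lemma nonpos_of_forall_pos_le_mul {x D : ℝ} (h : ∀ ε > 0, x ≤ ε * D) : x ≤ 0 := by
  have hlim : Tendsto (fun ε => ε * D) (𝓝[>] 0) (𝓝 0) := by
    simpa using (tendsto_nhdsWithin_of_tendsto_nhds (continuous_mul_const D).continuousAt.tendsto :
      Tendsto (fun ε => ε * D) (𝓝[>] 0) (𝓝 (0 * D)))
  exact ge_of_tendsto hlim (eventually_nhdsWithin_of_forall h)

section Perturbation

variable {n : ℕ} (k : ℕ)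

def perturbDir (i : Fin n → ℕ) (c ε : ℝ) : (Fin n → ℕ) → ℝ :=
  Pi.single i c - ε • ∑ ι, Pi.single (Pi.single ι (2 * k)) 1

lemma sum_perturbDir_mul {I : Finset (Fin n → ℕ)} {i : Fin n → ℕ} (hi : i ∈ I)
    (hpure : ∀ ι, Pi.single ι (2 * k) ∈ I) (c ε : ℝ) (a : (Fin n → ℕ) → ℝ) :
    ∑ j ∈ I, perturbDir k i c ε j * a j = c * a i - ε * ∑ ι, a (Pi.single ι (2 * k)) := by
  have hsingle : ∀ {i'} (c' : ℝ), i' ∈ I →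
      ∑ j ∈ I, (Pi.single i' c' : (Fin n → ℕ) → ℝ) j * a j = c' * a i' := fun {i'} c' hi' => by
    simp_rw [← Pi.single_mul_left_apply, Finset.sum_pi_single', if_pos hi']
  simp_rw [perturbDir, Pi.sub_apply, Pi.smul_apply, Finset.sum_apply, smul_eq_mul, sub_mul,
    Finset.sum_sub_distrib, mul_assoc, ← Finset.mul_sum, Finset.sum_mul, Finset.sum_comm (s := I),
    hsingle c hi, hsingle 1 (hpure _), one_mul]

end Perturbation

section Moments

variable {n k : ℕ} {I : Finset (Fin n → ℕ)} {g : (Fin n → ℕ) → ℝ} {lamstar : {i // i ∈ I} → ℝ}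

lemma integrable_and_sum_mul_le_integral_of_le (hfin : Lag I g (rhoRef k) lamstar ≠ ⊥)
    (hmax : ∀ lam, Lag I g (rhoRef k) lam ≤ Lag I g (rhoRef k) lamstar)
    {w : (Fin n → ℕ) → ℝ} {C : ℝ} (hC : ∀ t, ∑ j ∈ I, w j * monom j t ≤ C) :
    Integrable (fun t => (∑ j ∈ I, w j * monom j t) * maxEntDens k I lamstar t) ∧
      ∑ j ∈ I, w j * g j ≤ ∫ t, (∑ j ∈ I, w j * monom j t) * maxEntDens k I lamstar t :=
  integrable_mul_and_le_integral_of_exp_slope (integrable_maxEntDens_of_Lag_ne_bot hfin)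
    (fun t => (maxEntDens_pos lamstar t).le) hC
    fun _ hs => integrable_and_mul_le_integral_exp_sub_one hfin hmax hC hs.1.le

lemma sum_mul_le_sum_mul_integral (hfin : Lag I g (rhoRef k) lamstar ≠ ⊥)
    (hmax : ∀ lam, Lag I g (rhoRef k) lam ≤ Lag I g (rhoRef k) lamstar)
    (hint : ∀ j ∈ I, Integrable (fun t => monom j t * maxEntDens k I lamstar t))
    {w : (Fin n → ℕ) → ℝ} {C : ℝ} (hC : ∀ t, ∑ j ∈ I, w j * monom j t ≤ C) :
    ∑ j ∈ I, w j * g j ≤ ∑ j ∈ I, w j * ∫ t, monom j t * maxEntDens k I lamstar t := by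
  have h := (integrable_and_sum_mul_le_integral_of_le hfin hmax hC).2
  simp_rw [Finset.sum_mul, mul_assoc] at h
  rwa [integral_finsetSum _ fun j hj => (hint j hj).const_mul _, Finset.sum_congr rfl
    fun j _ => integral_const_mul (w j) _] at h

lemma sum_perturbDir_mul_monom {i : Fin n → ℕ} (hi : i ∈ I)
    (hpure : ∀ ι, Pi.single ι (2 * k) ∈ I) (c ε : ℝ) (t : Fin n → ℝ) :
    ∑ j ∈ I, perturbDir k i c ε j * monom j t = c * monom i t - ε * ∑ ι, t ι ^ (2 * k) := by
  simp_rw [sum_perturbDir_mul k hi hpure c ε fun j => monom j t, monom_single]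

lemma integrable_monom_mul {f : (Fin n → ℝ) → ℝ} (hf : Integrable f) (hf0 : ∀ t, 0 ≤ f t)
    (hS : Integrable fun t => (∑ ι, t ι ^ (2 * k)) * f t) {i : Fin n → ℕ}
    (hi : ∑ m, i m ≤ 2 * k) : Integrable fun t => monom i t * f t := by
  refine (hf.add hS).mono' ((continuous_monom i).aestronglyMeasurable.mul hf.1)
    (ae_of_all _ fun t => ?_)
  rw [norm_mul, Real.norm_eq_abs, Real.norm_of_nonneg (hf0 t), Pi.add_apply, ← one_add_mul]
  exact mul_le_mul_of_nonneg_right (abs_monom_le_one_add_sum hi t) (hf0 t)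

lemma integral_monom_mul_maxEntDens_eq (hpure : ∀ ι, Pi.single ι (2 * k) ∈ I)
    (hfin : Lag I g (rhoRef k) lamstar ≠ ⊥)
    (hmax : ∀ lam, Lag I g (rhoRef k) lam ≤ Lag I g (rhoRef k) lamstar)
    (hint : ∀ j ∈ I, Integrable (fun t => monom j t * maxEntDens k I lamstar t))
    {i : Fin n → ℕ} (hi : i ∈ I) (hlt : ∑ m, i m < 2 * k) :
    ∫ t, monom i t * maxEntDens k I lamstar t = g i := by
  set M : (Fin n → ℕ) → ℝ := fun j => ∫ t, monom j t * maxEntDens k I lamstar t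
  have key : ∀ c : ℝ, |c| = 1 → ∀ ε > 0,
      c * (g i - M i) ≤ ε * ∑ ι, (g (Pi.single ι (2 * k)) - M (Pi.single ι (2 * k))) := by
    intro c hc ε hε
    obtain ⟨C, hC⟩ := exists_abs_monom_le_mul_add hlt hε
    have h := sum_mul_le_sum_mul_integral hfin hmax hint (w := perturbDir k i c ε) (C := C)
      fun t => by
        rw [sum_perturbDir_mul_monom hi hpure]
        have : c * monom i t ≤ |monom i t| := by
          simpa [abs_mul, hc] using le_abs_self (c * monom i t)
        linarith [hC t]
    rw [sum_perturbDir_mul k hi hpure c ε g, sum_perturbDir_mul k hi hpure c ε M] at h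
    rw [Finset.sum_sub_distrib]
    linarith
  linarith [nonpos_of_forall_pos_le_mul (key 1 (by simp)),
    nonpos_of_forall_pos_le_mul (key (-1) (by simp))]

end Moments

theorem stmt_12_general {n : ℕ} (k : ℕ)
    (I : Finset (Fin n → ℕ)) (hI : ∀ i : Fin n → ℕ, i ∈ I ↔ ∑ m, i m ≤ 2 * k)
    (g : (Fin n → ℕ) → ℝ)
    (lamstar : {i // i ∈ I} → ℝ)
    (hfin : Lag I g (rhoRef k) lamstar ≠ ⊥)
    (hmax : ∀ lam : {i // i ∈ I} → ℝ, Lag I g (rhoRef k) lam ≤ Lag I g (rhoRef k) lamstar) :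
    (∀ i ∈ I, Integrable (fun t => monom i t * maxEntDens k I lamstar t)) ∧
    (∀ i ∈ I, ∑ m, i m < 2 * k → ∫ t, monom i t * maxEntDens k I lamstar t = g i) ∧
    (∀ ι : Fin n, ∫ t, t ι ^ (2 * k) * maxEntDens k I lamstar t ≤
      g (fun m => if m = ι then 2 * k else 0)) := by
  have hpure : ∀ ι, Pi.single ι (2 * k) ∈ I := fun ι => (hI _).2 (by simp)
  have hzero : (0 : Fin n → ℕ) ∈ I := (hI 0).2 (by simp)
  have hS : Integrable fun t => (∑ ι, t ι ^ (2 * k)) * maxEntDens k I lamstar t := by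
    have h := (integrable_and_sum_mul_le_integral_of_le hfin hmax
      (w := perturbDir k 0 0 1) (C := 0) fun t => by
        rw [sum_perturbDir_mul_monom hzero hpure, zero_mul, zero_sub, one_mul, neg_nonpos]
        exact Finset.sum_nonneg fun _ _ => (even_two_mul k).pow_nonneg _).1
    simp_rw [sum_perturbDir_mul_monom hzero hpure] at h
    simpa using h.neg
  have hint : ∀ i ∈ I, Integrable fun t => monom i t * maxEntDens k I lamstar t :=
    fun i hi => integrable_monom_mul (integrable_maxEntDens_of_Lag_ne_bot hfin)
      (fun t => (maxEntDens_pos lamstar t).le) hS ((hI i).1 hi)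
  refine ⟨hint, fun i hi hlt => integral_monom_mul_maxEntDens_eq hpure hfin hmax hint hi hlt,
    fun ι => ?_⟩
  have h := sum_mul_le_sum_mul_integral hfin hmax hint
    (w := perturbDir k (Pi.single ι (2 * k)) (-1) 0) (C := 0) fun t => by
      rw [sum_perturbDir_mul_monom (hpure ι) hpure, monom_single]
      simp only [neg_one_mul, zero_mul, sub_zero, neg_nonpos]
      exact (even_two_mul k).pow_nonneg _
  rw [sum_perturbDir_mul k (hpure ι) hpure, sum_perturbDir_mul k (hpure ι) hpure] at h
  have hP : (Pi.single ι (2 * k) : Fin n → ℕ) = fun m => if m = ι then 2 * k else 0 := by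
    ext m; simp [Pi.single_apply]
  simp only [monom_single, neg_one_mul, zero_mul, sub_zero, neg_le_neg_iff] at h
  rwa [hP] at h

/-- For `T = ℝⁿ`, `I = {i : |i| ≤ 2k}` and `ρ(t) = e^{−‖t‖^{2k}}`, if `λ*` is a point where
the Lagrangian attains a finite global maximum, then `f₀ = e^{∑ λ*_i t^i} ρ` has finite
moments of all orders `≤ 2k`, its moments of order `< 2k` equal `g_i`, and its pure moments
of order `2k` are at most `g_{2k·e_ι}`. -/
theorem stmt_12 {n : ℕ} (k : ℕ) (hk : 0 < k)
    (I : Finset (Fin n → ℕ)) (hI : ∀ i : Fin n → ℕ, i ∈ I ↔ ∑ m, i m ≤ 2 * k)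
    (g : (Fin n → ℕ) → ℝ) (hg0 : g 0 = 1)
    (lamstar : {i // i ∈ I} → ℝ)
    (hfin : Lag I g (rhoRef k) lamstar ≠ ⊥)
    (hmax : ∀ lam : {i // i ∈ I} → ℝ, Lag I g (rhoRef k) lam ≤ Lag I g (rhoRef k) lamstar) :
    (∀ i ∈ I, Integrable (fun t => monom i t * maxEntDens k I lamstar t)) ∧
    (∀ i ∈ I, ∑ m, i m < 2 * k → ∫ t, monom i t * maxEntDens k I lamstar t = g i) ∧
    (∀ ι : Fin n, ∫ t, t ι ^ (2 * k) * maxEntDens k I lamstar t ≤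
      g (fun m => if m = ι then 2 * k else 0)) :=
  stmt_12_general k I hI g lamstar hfin hmax
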